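/- If ψ_0 and ψ_1 are two distinct label configurations that are successors of each other under the update rule ψ_{i}(n) = min(argmax_m [(Aμ_m^{(i-1)})(n) + R_m(n)]), then there exists a label m_0 such that ⟨A(μ_{m_0}^{(1)} − μ_{m_0}^{(0)}), μ_{m_0}^{(1)} − μ_{m_0}^{(0)}⟩ < 0, where μ_{m_0}^{(1)} − μ_{m_0}^{(0)} is a {-1,0,1}-valued function. -/
import Mathlib


open Finset

noncomputable section

def ip {Ω : Type*} [Fintype Ω] (f g : Ω → ℝ) : ℝ := ∑ n, f n * g n

def mask {Ω : Type*} {M : ℕ} (ψ : Ω → Fin M) (m : Fin M) : Ω → ℝ :=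
  fun n => if ψ n = m then 1 else 0

open Classical in
def update {Ω : Type*} [Fintype Ω] {M : ℕ} [NeZero M]
    (A : (Ω → ℝ) → (Ω → ℝ)) (R : Fin M → Ω → ℝ) (ψ : Ω → Fin M) : Ω → Fin M :=
  fun n =>
    (Finset.univ.filter (fun m => ∀ m', A (mask ψ m') n + R m' n ≤ A (mask ψ m) n + R m n)).min'
      (by
        obtain ⟨m, -, hm⟩ := Finset.exists_max_image (Finset.univ : Finset (Fin M))
          (fun m => A (mask ψ m) n + R m n) ⟨0, Finset.mem_univ 0⟩
        exact ⟨m, Finset.mem_filter.mpr ⟨Finset.mem_univ m, fun m' => hm m' (Finset.mem_univ m')⟩⟩)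

section Aux
variable {Ω : Type*} [Fintype Ω] {M : ℕ} [NeZero M]

open Classical in
lemma update_mem (A : (Ω → ℝ) → (Ω → ℝ)) (R : Fin M → Ω → ℝ) (ψ : Ω → Fin M) (n : Ω) :
    update A R ψ n ∈ (Finset.univ.filter
      (fun m => ∀ m', A (mask ψ m') n + R m' n ≤ A (mask ψ m) n + R m n)) := by
  unfold update
  exact Finset.min'_mem _ _

lemma update_le (A : (Ω → ℝ) → (Ω → ℝ)) (R : Fin M → Ω → ℝ) (ψ : Ω → Fin M)
    (n : Ω) (m' : Fin M) :
    A (mask ψ m') n + R m' n ≤ A (mask ψ (update A R ψ n)) n + R (update A R ψ n) n := by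
  classical
  exact (Finset.mem_filter.mp (update_mem A R ψ n)).2 m'

lemma update_min (A : (Ω → ℝ) → (Ω → ℝ)) (R : Fin M → Ω → ℝ) (ψ : Ω → Fin M)
    (n : Ω) (m' : Fin M)
    (hm' : ∀ m'', A (mask ψ m'') n + R m'' n ≤ A (mask ψ m') n + R m' n) :
    update A R ψ n ≤ m' := by
  classical
  unfold update
  exact Finset.min'_le _ _ (Finset.mem_filter.mpr ⟨Finset.mem_univ m', hm'⟩)

set_option linter.unusedSectionVars false in
/-- key cross-sum identity -/
lemma sum_mask (A : (Ω → ℝ) → (Ω → ℝ)) (ψ φ : Ω → Fin M) :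
    ∑ m, ip (A (mask ψ m)) (mask φ m) = ∑ n, A (mask ψ (φ n)) n := by
  classical
  unfold ip mask
  rw [Finset.sum_comm]
  refine Finset.sum_congr rfl fun n _ => ?_
  rw [Finset.sum_congr rfl (fun m _ => by
    rw [mul_ite, mul_one, mul_zero] :
      ∀ m ∈ Finset.univ, A (fun k => if ψ k = m then (1:ℝ) else 0) n *
        (if φ n = m then (1:ℝ) else 0) =
        if φ n = m then A (fun k => if ψ k = m then (1:ℝ) else 0) n else 0)]
  simp

end Aux

theorem stmt2 {Ω : Type*} [Fintype Ω] {M : ℕ} [NeZero M]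
    (A : (Ω → ℝ) → (Ω → ℝ)) (hlin : IsLinearMap ℝ A)
    (hsa : ∀ f g : Ω → ℝ, ip (A f) g = ip f (A g))
    (R : Fin M → Ω → ℝ) (ψ₀ ψ₁ : Ω → Fin M) (hne : ψ₀ ≠ ψ₁)
    (h01 : update A R ψ₀ = ψ₁) (h10 : update A R ψ₁ = ψ₀) :
    ∃ m₀ : Fin M,
      ip (A (fun n => mask ψ₁ m₀ n - mask ψ₀ m₀ n))
         (fun n => mask ψ₁ m₀ n - mask ψ₀ m₀ n) < 0 := by
  classical
  -- ip symmetry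
  have ipsymm : ∀ f g : Ω → ℝ, ip f g = ip g f := fun f g =>
    Finset.sum_congr rfl fun n _ => mul_comm _ _
  -- pointwise inequalities
  have key0 : ∀ n m', A (mask ψ₀ m') n + R m' n ≤ A (mask ψ₀ (ψ₁ n)) n + R (ψ₁ n) n := by
    intro n m'; rw [← h01]; exact update_le A R ψ₀ n m'
  have key1 : ∀ n m', A (mask ψ₁ m') n + R m' n ≤ A (mask ψ₁ (ψ₀ n)) n + R (ψ₀ n) n := by
    intro n m'; rw [← h10]; exact update_le A R ψ₁ n m'
  -- pointwise exchange inequality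
  have hpt : ∀ n, A (mask ψ₀ (ψ₀ n)) n + A (mask ψ₁ (ψ₁ n)) n ≤
      A (mask ψ₀ (ψ₁ n)) n + A (mask ψ₁ (ψ₀ n)) n := by
    intro n
    have h1 := key0 n (ψ₀ n)
    have h2 := key1 n (ψ₁ n)
    linarith
  -- strict at a point of disagreement
  obtain ⟨n₀, hn₀⟩ : ∃ n, ψ₀ n ≠ ψ₁ n := by
    by_contra h; push_neg at h; exact hne (funext h)
  have hstrict : A (mask ψ₀ (ψ₀ n₀)) n₀ + A (mask ψ₁ (ψ₁ n₀)) n₀ <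
      A (mask ψ₀ (ψ₁ n₀)) n₀ + A (mask ψ₁ (ψ₀ n₀)) n₀ := by
    rcases lt_or_eq_of_le (hpt n₀) with h | h
    · exact h
    · exfalso
      have h1 := key0 n₀ (ψ₀ n₀)
      have h2 := key1 n₀ (ψ₁ n₀)
      have e1 : A (mask ψ₀ (ψ₀ n₀)) n₀ + R (ψ₀ n₀) n₀ =
          A (mask ψ₀ (ψ₁ n₀)) n₀ + R (ψ₁ n₀) n₀ := by linarith
      have e2 : A (mask ψ₁ (ψ₁ n₀)) n₀ + R (ψ₁ n₀) n₀ =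
          A (mask ψ₁ (ψ₀ n₀)) n₀ + R (ψ₀ n₀) n₀ := by linarith
      have hle1 : ψ₁ n₀ ≤ ψ₀ n₀ := by
        rw [← h01]
        exact update_min A R ψ₀ n₀ (ψ₀ n₀) (fun m'' => e1 ▸ key0 n₀ m'')
      have hle2 : ψ₀ n₀ ≤ ψ₁ n₀ := by
        rw [← h10]
        exact update_min A R ψ₁ n₀ (ψ₁ n₀) (fun m'' => e2 ▸ key1 n₀ m'')
      exact hn₀ (le_antisymm hle2 hle1)
  -- sum inequality
  have hsum : ∑ n, (A (mask ψ₀ (ψ₀ n)) n + A (mask ψ₁ (ψ₁ n)) n) <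
      ∑ n, (A (mask ψ₀ (ψ₁ n)) n + A (mask ψ₁ (ψ₀ n)) n) :=
    Finset.sum_lt_sum (fun n _ => hpt n) ⟨n₀, Finset.mem_univ n₀, hstrict⟩
  rw [Finset.sum_add_distrib, Finset.sum_add_distrib,
    ← sum_mask A ψ₀ ψ₀, ← sum_mask A ψ₁ ψ₁, ← sum_mask A ψ₀ ψ₁, ← sum_mask A ψ₁ ψ₀] at hsum
  -- express the goal sum
  have expand : ∀ m : Fin M,
      ip (A (fun n => mask ψ₁ m n - mask ψ₀ m n)) (fun n => mask ψ₁ m n - mask ψ₀ m n) =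
      ip (A (mask ψ₁ m)) (mask ψ₁ m) + ip (A (mask ψ₀ m)) (mask ψ₀ m)
        - ip (A (mask ψ₀ m)) (mask ψ₁ m) - ip (A (mask ψ₁ m)) (mask ψ₀ m) := by
    intro m
    have hA : A (fun n => mask ψ₁ m n - mask ψ₀ m n) =
        fun n => A (mask ψ₁ m) n - A (mask ψ₀ m) n := by
      have h := hlin.map_sub (mask ψ₁ m) (mask ψ₀ m)
      funext n
      exact congrFun h n
    rw [hA]
    unfold ip
    rw [← Finset.sum_add_distrib, ← Finset.sum_sub_distrib, ← Finset.sum_sub_distrib]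
    exact Finset.sum_congr rfl fun n _ => by ring
  have hsum2 : ∑ m, ip (A (fun n => mask ψ₁ m n - mask ψ₀ m n))
      (fun n => mask ψ₁ m n - mask ψ₀ m n) < 0 := by
    have hcross : ∀ m : Fin M, ip (A (mask ψ₀ m)) (mask ψ₁ m) =
        ip (A (mask ψ₁ m)) (mask ψ₀ m) := by
      intro m
      rw [hsa, ipsymm]
    calc ∑ m, ip (A (fun n => mask ψ₁ m n - mask ψ₀ m n))
          (fun n => mask ψ₁ m n - mask ψ₀ m n)
        = ∑ m, (ip (A (mask ψ₁ m)) (mask ψ₁ m) + ip (A (mask ψ₀ m)) (mask ψ₀ m)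
            - ip (A (mask ψ₀ m)) (mask ψ₁ m) - ip (A (mask ψ₁ m)) (mask ψ₀ m)) :=
          Finset.sum_congr rfl fun m _ => expand m
      _ = (∑ m, ip (A (mask ψ₁ m)) (mask ψ₁ m)) + (∑ m, ip (A (mask ψ₀ m)) (mask ψ₀ m))
            - (∑ m, ip (A (mask ψ₀ m)) (mask ψ₁ m)) - (∑ m, ip (A (mask ψ₁ m)) (mask ψ₀ m)) := by
          rw [Finset.sum_sub_distrib, Finset.sum_sub_distrib, Finset.sum_add_distrib]
      _ < 0 := by linarith
  by_contra h
  push_neg at h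
  have : (0:ℝ) ≤ ∑ m, ip (A (fun n => mask ψ₁ m n - mask ψ₀ m n))
      (fun n => mask ψ₁ m n - mask ψ₀ m n) :=
    Finset.sum_nonneg fun m _ => h m
  linarith
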